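/- In a repeated zero-sum matrix game M with value v played by two ε-Hannan-consistent players, almost surely v − 2ε ≤ liminf_{t→∞} u₁(σ̂₁(t), br) and limsup_{t→∞} u₁(br, σ̂₂(t)) ≤ v + 2ε, where σ̂_p(t) denotes the empirical frequency strategy of player p after t rounds. -/

import Mathlib

open MeasureTheory Filter
open scoped BigOperators

/-!
Against the opponent's empirical frequency, best-response values bracket the game value:
`min_j (σ̂₁ M)_j ≤ v ≤ max_i (M σ̂₂)_i`. The sum of the two players' average regrets is exactly
the gap `max_i (M σ̂₂)_i - min_j (σ̂₁ M)_j`, because the realized payoffs cancel. So each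
best-response value lies within the total regret of `v`, and by Hannan consistency that regret
is eventually below `2ε + δ` for every `δ > 0`.
-/

/-- Expected payoff to player 1 in the matrix game `M` under mixed strategies `σ₁, σ₂`. -/
noncomputable def payoff {m n : ℕ} (M : Fin m → Fin n → ℝ)
    (σ₁ : Fin m → ℝ) (σ₂ : Fin n → ℝ) : ℝ :=
  ∑ i, ∑ j, σ₁ i * M i j * σ₂ j

/-- The (minimax) value of the zero-sum matrix game `M`. -/
noncomputable def gameValue {m n : ℕ} (M : Fin m → Fin n → ℝ) : ℝ :=
  ⨅ σ₂ : stdSimplex ℝ (Fin n), ⨆ σ₁ : stdSimplex ℝ (Fin m), payoff M σ₁.1 σ₂.1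

open Finset

section EmpiricalFrequency

variable {α : Type*} [Fintype α] [DecidableEq α]

/-- The paper's `σ̂(t)`, built from the rounds `0, …, t-1`; at `t = 0` it is the zero function. -/
noncomputable def empiricalFreq (a : ℕ → α) (t : ℕ) (x : α) : ℝ :=
  #{s ∈ range t | a s = x} / t

lemma empiricalFreq_mem_stdSimplex (a : ℕ → α) {t : ℕ} (ht : t ≠ 0) :
    empiricalFreq a t ∈ stdSimplex ℝ α := by
  refine ⟨fun x => by unfold empiricalFreq; positivity, ?_⟩
  have hfib : ∑ x, (#{s ∈ range t | a s = x} : ℝ) = t := by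
    exact_mod_cast (card_eq_sum_card_fiberwise fun s _ => mem_univ (a s)).symm.trans (card_range t)
  simp only [empiricalFreq, ← sum_div, hfib]
  exact div_self (Nat.cast_ne_zero.2 ht)

lemma sum_range_div_eq_sum_empiricalFreq_mul (a : ℕ → α) (t : ℕ) (f : α → ℝ) :
    (∑ s ∈ range t, f (a s)) / t = ∑ x, empiricalFreq a t x * f x := by
  rw [← sum_fiberwise_of_maps_to (fun s _ => mem_univ (a s)), sum_div]
  refine sum_congr rfl fun x _ => ?_
  rw [sum_congr rfl fun s hs => by rw [(mem_filter.1 hs).2], sum_const, nsmul_eq_mul,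
    empiricalFreq, div_mul_eq_mul_div]

end EmpiricalFrequency

section WeightedAverage

variable {ι : Type*} [Fintype ι] {w : ι → ℝ}

lemma sum_mul_le_ciSup_of_mem_stdSimplex (hw : w ∈ stdSimplex ℝ ι) (f : ι → ℝ) :
    ∑ i, w i * f i ≤ ⨆ i, f i :=
  calc ∑ i, w i * f i ≤ ∑ i, w i * ⨆ i, f i :=
        sum_le_sum fun i _ => mul_le_mul_of_nonneg_left
          (le_ciSup (Set.finite_range f).bddAbove i) (hw.1 i)
    _ = ⨆ i, f i := by rw [← sum_mul, hw.2, one_mul]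

lemma ciInf_le_sum_mul_of_mem_stdSimplex (hw : w ∈ stdSimplex ℝ ι) (f : ι → ℝ) :
    ⨅ i, f i ≤ ∑ i, w i * f i :=
  calc ⨅ i, f i = ∑ i, w i * ⨅ i, f i := by rw [← sum_mul, hw.2, one_mul]
    _ ≤ ∑ i, w i * f i :=
        sum_le_sum fun i _ => mul_le_mul_of_nonneg_left
          (ciInf_le (Set.finite_range f).bddBelow i) (hw.1 i)

end WeightedAverage

section MatrixGame

variable {m n : ℕ} (M : Fin m → Fin n → ℝ)

lemma payoff_eq_sum_rows (σ₁ : Fin m → ℝ) (σ₂ : Fin n → ℝ) :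
    payoff M σ₁ σ₂ = ∑ i, σ₁ i * ∑ j, σ₂ j * M i j := by
  simp only [payoff, mul_sum]
  exact sum_congr rfl fun i _ => sum_congr rfl fun j _ => by ring

lemma payoff_eq_sum_cols (σ₁ : Fin m → ℝ) (σ₂ : Fin n → ℝ) :
    payoff M σ₁ σ₂ = ∑ j, σ₂ j * ∑ i, σ₁ i * M i j := by
  rw [payoff, sum_comm]
  simp only [mul_sum]
  exact sum_congr rfl fun j _ => sum_congr rfl fun i _ => by ring

variable {M} {σ₁ : Fin m → ℝ} {σ₂ : Fin n → ℝ}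

lemma payoff_le_ciSup_rows (h₁ : σ₁ ∈ stdSimplex ℝ (Fin m)) (σ₂ : Fin n → ℝ) :
    payoff M σ₁ σ₂ ≤ ⨆ i, ∑ j, σ₂ j * M i j :=
  payoff_eq_sum_rows M σ₁ σ₂ ▸ sum_mul_le_ciSup_of_mem_stdSimplex h₁ _

lemma ciInf_cols_le_payoff (σ₁ : Fin m → ℝ) (h₂ : σ₂ ∈ stdSimplex ℝ (Fin n)) :
    ⨅ j, ∑ i, σ₁ i * M i j ≤ payoff M σ₁ σ₂ :=
  payoff_eq_sum_cols M σ₁ σ₂ ▸ ciInf_le_sum_mul_of_mem_stdSimplex h₂ _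

lemma bddAbove_range_payoff (σ₂ : Fin n → ℝ) :
    BddAbove (Set.range fun σ₁ : stdSimplex ℝ (Fin m) => payoff M σ₁ σ₂) :=
  ⟨_, Set.forall_mem_range.2 fun σ₁ => payoff_le_ciSup_rows σ₁.2 σ₂⟩

lemma gameValue_le_ciSup_rows [NeZero m] (h₂ : σ₂ ∈ stdSimplex ℝ (Fin n)) :
    gameValue M ≤ ⨆ i, ∑ j, σ₂ j * M i j := by
  obtain ⟨τ⟩ : Nonempty (stdSimplex ℝ (Fin m)) := inferInstance
  have hbdd : BddBelow (Set.range fun σ₂ : stdSimplex ℝ (Fin n) =>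
      ⨆ σ₁ : stdSimplex ℝ (Fin m), payoff M σ₁ σ₂) :=
    ⟨⨅ j, ∑ i, τ.1 i * M i j, Set.forall_mem_range.2 fun σ₂ =>
      (ciInf_cols_le_payoff _ σ₂.2).trans (le_ciSup (bddAbove_range_payoff _) τ)⟩
  calc gameValue M ≤ ⨆ σ₁ : stdSimplex ℝ (Fin m), payoff M σ₁ σ₂ := ciInf_le hbdd ⟨σ₂, h₂⟩
    _ ≤ ⨆ i, ∑ j, σ₂ j * M i j := ciSup_le fun σ₁ => payoff_le_ciSup_rows σ₁.2 σ₂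

lemma ciInf_cols_le_gameValue [NeZero n] (h₁ : σ₁ ∈ stdSimplex ℝ (Fin m)) :
    ⨅ j, ∑ i, σ₁ i * M i j ≤ gameValue M :=
  le_ciInf fun σ₂ => (ciInf_cols_le_payoff σ₁ σ₂.2).trans
    (le_ciSup (bddAbove_range_payoff σ₂.1) ⟨σ₁, h₁⟩)

end MatrixGame

section EmpiricalPlay

lemma Real.iSup_div_natCast {ι : Sort*} (f : ι → ℝ) (t : ℕ) : (⨆ i, f i) / t = ⨆ i, f i / t := by
  simp only [div_eq_mul_inv, Real.iSup_mul_of_nonneg (inv_nonneg.2 t.cast_nonneg)]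

lemma Real.iInf_div_natCast {ι : Sort*} (f : ι → ℝ) (t : ℕ) : (⨅ i, f i) / t = ⨅ i, f i / t := by
  simp only [div_eq_mul_inv, Real.iInf_mul_of_nonneg (inv_nonneg.2 t.cast_nonneg)]

variable {m n : ℕ} {M : Fin m → Fin n → ℝ}

lemma gameValue_le_bestResponse [NeZero m] (J : ℕ → Fin n) {t : ℕ} (ht : t ≠ 0) :
    gameValue M ≤ (⨆ i, ∑ s ∈ range t, M i (J s)) / t := by
  rw [Real.iSup_div_natCast]
  exact (gameValue_le_ciSup_rows (empiricalFreq_mem_stdSimplex J ht)).trans_eq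
    (iSup_congr fun i => (sum_range_div_eq_sum_empiricalFreq_mul J t (M i)).symm)

lemma bestResponse_le_gameValue [NeZero n] (I : ℕ → Fin m) {t : ℕ} (ht : t ≠ 0) :
    (⨅ j, ∑ s ∈ range t, M (I s) j) / t ≤ gameValue M := by
  rw [Real.iInf_div_natCast]
  exact (iInf_congr fun j => sum_range_div_eq_sum_empiricalFreq_mul I t (M · j)).trans_le
    (ciInf_cols_le_gameValue (empiricalFreq_mem_stdSimplex I ht))

end EmpiricalPlay

/-- Average external regret after `t` rounds: `g k s` is the payoff the fixed action `k` would
have earned in round `s`, and `x s` the payoff actually earned. -/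
noncomputable def averageRegret {κ : Type*} (g : κ → ℕ → ℝ) (x : ℕ → ℝ) (t : ℕ) : ℝ :=
  ((⨆ k, ∑ s ∈ range t, g k s) - ∑ s ∈ range t, x s) / t

lemma isBoundedUnder_le_averageRegret {κ : Type*} [Nonempty κ] {g : κ → ℕ → ℝ} {x : ℕ → ℝ}
    {c : ℝ} (h : ∀ k s, g k s - x s ≤ c) :
    IsBoundedUnder (· ≤ ·) atTop (averageRegret g x) := by
  refine isBoundedUnder_of_eventually_le (a := c) ((eventually_ne_atTop 0).mono fun t ht => ?_)
  rw [averageRegret, div_le_iff₀ (Nat.cast_pos.2 (Nat.pos_of_ne_zero ht))]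
  refine sub_le_iff_le_add.2 (ciSup_le fun k => sub_le_iff_le_add.1 ?_)
  calc ∑ s ∈ range t, g k s - ∑ s ∈ range t, x s = ∑ s ∈ range t, (g k s - x s) :=
        (sum_sub_distrib _ _).symm
    _ ≤ ∑ s ∈ range t, c := sum_le_sum fun s _ => h k s
    _ = c * t := by simp [mul_comm]

/-- Player 2 earns `1 - M`, so the realized payoffs cancel in the sum of the two regrets. -/
lemma averageRegret_add_averageRegret_one_sub {m n : ℕ} [NeZero n] (M : Fin m → Fin n → ℝ)
    (I : ℕ → Fin m) (J : ℕ → Fin n) (t : ℕ) :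
    averageRegret (fun i s => M i (J s)) (fun s => M (I s) (J s)) t +
        averageRegret (fun j s => 1 - M (I s) j) (fun s => 1 - M (I s) (J s)) t =
      (⨆ i, ∑ s ∈ range t, M i (J s)) / t - (⨅ j, ∑ s ∈ range t, M (I s) j) / t := by
  have hsup : ⨆ j, ∑ s ∈ range t, (1 - M (I s) j) = t - ⨅ j, ∑ s ∈ range t, M (I s) j := by
    simp only [sum_sub_distrib, sum_const, card_range, nsmul_one]
    exact ((OrderIso.subLeft (t : ℝ)).map_ciInf (Set.finite_range _).bddBelow).symm
  rw [averageRegret, averageRegret, hsup]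
  simp only [sum_sub_distrib, sum_const, card_range, nsmul_one]
  ring

lemma eventually_add_lt_of_limsup_le {α : Type*} {l : Filter α} {u v : α → ℝ} {a b δ : ℝ}
    (hu : limsup u l ≤ a) (hv : limsup v l ≤ b) (hu' : IsBoundedUnder (· ≤ ·) l u)
    (hv' : IsBoundedUnder (· ≤ ·) l v) (hδ : 0 < δ) :
    ∀ᶠ x in l, u x + v x < a + b + δ := by
  filter_upwards
    [eventually_lt_of_limsup_lt (hu.trans_lt (lt_add_of_pos_right a (half_pos hδ))) hu',
      eventually_lt_of_limsup_lt (hv.trans_lt (lt_add_of_pos_right b (half_pos hδ))) hv']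
    with x hux hvx
  linarith

theorem gameValue_sub_le_liminf_and_limsup_le_gameValue_add {m n : ℕ} [NeZero m] [NeZero n]
    {M : Fin m → Fin n → ℝ} (hM : ∀ i j, M i j ∈ Set.Icc (0 : ℝ) 1)
    (I : ℕ → Fin m) (J : ℕ → Fin n) {ε₁ ε₂ : ℝ}
    (h₁ : limsup (averageRegret (fun i s => M i (J s)) (fun s => M (I s) (J s))) atTop ≤ ε₁)
    (h₂ : limsup (averageRegret (fun j s => 1 - M (I s) j) (fun s => 1 - M (I s) (J s))) atTop
      ≤ ε₂) :
    gameValue M - (ε₁ + ε₂) ≤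
        liminf (fun t : ℕ => (⨅ j, ∑ s ∈ range t, M (I s) j) / (t : ℝ)) atTop ∧
      limsup (fun t : ℕ => (⨆ i, ∑ s ∈ range t, M i (J s)) / (t : ℝ)) atTop ≤
        gameValue M + (ε₁ + ε₂) := by
  have hb₁ : IsBoundedUnder (· ≤ ·) atTop
      (averageRegret (fun i s => M i (J s)) (fun s => M (I s) (J s))) :=
    isBoundedUnder_le_averageRegret (c := 1) fun i s => by
      linarith [(hM i (J s)).2, (hM (I s) (J s)).1]
  have hb₂ : IsBoundedUnder (· ≤ ·) atTop
      (averageRegret (fun j s => 1 - M (I s) j) (fun s => 1 - M (I s) (J s))) :=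
    isBoundedUnder_le_averageRegret (c := 1) fun j s => by
      linarith [(hM (I s) j).1, (hM (I s) (J s)).2]
  have hsup : ∀ᶠ t : ℕ in atTop, gameValue M ≤ (⨆ i, ∑ s ∈ range t, M i (J s)) / t :=
    (eventually_ne_atTop 0).mono fun t => gameValue_le_bestResponse J
  have hinf : ∀ᶠ t : ℕ in atTop, (⨅ j, ∑ s ∈ range t, M (I s) j) / t ≤ gameValue M :=
    (eventually_ne_atTop 0).mono fun t => bestResponse_le_gameValue I
  have hgap := averageRegret_add_averageRegret_one_sub M I J
  constructor
  · refine le_of_forall_sub_le fun δ hδ => le_liminf_of_le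
      (isBoundedUnder_of_eventually_le hinf).isCoboundedUnder_ge ?_
    filter_upwards [eventually_add_lt_of_limsup_le h₁ h₂ hb₁ hb₂ hδ, hsup] with t hlt hv
    linarith [hgap t]
  · refine le_of_forall_pos_le_add fun δ hδ => limsup_le_of_le
      (isBoundedUnder_of_eventually_ge hsup).isCoboundedUnder_le ?_
    filter_upwards [eventually_add_lt_of_limsup_le h₁ h₂ hb₁ hb₂ hδ, hinf] with t hlt hv
    linarith [hgap t]

theorem stmt2_general {m n : ℕ} [NeZero m] [NeZero n]
    {Ω : Type*} [MeasurableSpace Ω] (P : Measure Ω)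
    (M : Fin m → Fin n → ℝ) (hM : ∀ i j, M i j ∈ Set.Icc (0:ℝ) 1)
    (I : Ω → ℕ → Fin m) (J : Ω → ℕ → Fin n) (ε : ℝ)
    (hHC1 : ∀ᵐ ω ∂P, limsup (fun t : ℕ =>
        ((⨆ i, ∑ s ∈ Finset.range t, M i (J ω s)) -
          ∑ s ∈ Finset.range t, M (I ω s) (J ω s)) / (t : ℝ)) atTop ≤ ε)
    (hHC2 : ∀ᵐ ω ∂P, limsup (fun t : ℕ =>
        ((⨆ j, ∑ s ∈ Finset.range t, (1 - M (I ω s) j)) -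
          ∑ s ∈ Finset.range t, (1 - M (I ω s) (J ω s))) / (t : ℝ)) atTop ≤ ε) :
    ∀ᵐ ω ∂P,
      gameValue M - 2 * ε ≤ liminf (fun t : ℕ =>
          (⨅ j, ∑ s ∈ Finset.range t, M (I ω s) j) / (t : ℝ)) atTop ∧
      limsup (fun t : ℕ =>
          (⨆ i, ∑ s ∈ Finset.range t, M i (J ω s)) / (t : ℝ)) atTop ≤ gameValue M + 2 * ε := by
  filter_upwards [hHC1, hHC2] with ω h₁ h₂
  rw [two_mul]
  exact gameValue_sub_le_liminf_and_limsup_le_gameValue_add hM (I ω) (J ω) h₁ h₂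

/-- If both players of the repeated zero-sum matrix game `M` (with value `v`) are
ε-Hannan consistent, then almost surely
`v - 2ε ≤ liminf u₁(σ̂₁(t), br)` and `limsup u₁(br, σ̂₂(t)) ≤ v + 2ε`,
where `u₁(σ̂₁(t), br) = min_j Σ_i σ̂₁(t)(i) M i j = (⨅ j, Σ_{s<t} M (I s) j)/t` and
`u₁(br, σ̂₂(t)) = max_i Σ_j σ̂₂(t)(j) M i j = (⨆ i, Σ_{s<t} M i (J s))/t` are the
best-response values against the empirical frequency strategies. -/
theorem stmt2 {m n : ℕ} [NeZero m] [NeZero n]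
    {Ω : Type*} [MeasurableSpace Ω] (P : Measure Ω) [IsProbabilityMeasure P]
    (M : Fin m → Fin n → ℝ) (hM : ∀ i j, M i j ∈ Set.Icc (0:ℝ) 1)
    (I : Ω → ℕ → Fin m) (J : Ω → ℕ → Fin n) (ε : ℝ) (hε : 0 ≤ ε)
    (hHC1 : ∀ᵐ ω ∂P, limsup (fun t : ℕ =>
        ((⨆ i, ∑ s ∈ Finset.range t, M i (J ω s)) -
          ∑ s ∈ Finset.range t, M (I ω s) (J ω s)) / (t : ℝ)) atTop ≤ ε)
    (hHC2 : ∀ᵐ ω ∂P, limsup (fun t : ℕ =>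
        ((⨆ j, ∑ s ∈ Finset.range t, (1 - M (I ω s) j)) -
          ∑ s ∈ Finset.range t, (1 - M (I ω s) (J ω s))) / (t : ℝ)) atTop ≤ ε) :
    ∀ᵐ ω ∂P,
      gameValue M - 2 * ε ≤ liminf (fun t : ℕ =>
          (⨅ j, ∑ s ∈ Finset.range t, M (I ω s) j) / (t : ℝ)) atTop ∧
      limsup (fun t : ℕ =>
          (⨆ i, ∑ s ∈ Finset.range t, M i (J ω s)) / (t : ℝ)) atTop ≤ gameValue M + 2 * ε :=
  stmt2_general P M hM I J ε hHC1 hHC2
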